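/- If G is a connected simple graph on n vertices whose diameter is at most D (where D ≥ 1), then spr(G) ≤ n²(n−1)/2 − n(n−1)²/(2D) + n(n−1)/2. -/

import Mathlib

open SimpleGraph Finset

attribute [local instance] Classical.propDecidable

noncomputable section

/-- `closerCount G u v` is the number of vertices of `G` strictly closer to `u` than to `v`. -/
def closerCount {V : Type*} [Fintype V] (G : SimpleGraph V) (u v : V) : ℕ :=
  (Finset.univ.filter fun w => G.dist w u < G.dist w v).card

/-- The Mostar index of a graph. -/
def mostar {V : Type*} [Fintype V] (G : SimpleGraph V) : ℤ :=
  ∑ e ∈ G.edgeFinset,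
    Sym2.lift ⟨fun u v => |(closerCount G u v : ℤ) - (closerCount G v u : ℤ)|,
      fun _ _ => abs_sub_comm _ _⟩ e

/-- Number of pendent vertices strictly closer to `u` than to `v`. -/
def pendentCloserCount {V : Type*} [Fintype V] (G : SimpleGraph V) (u v : V) : ℕ :=
  (Finset.univ.filter fun w => G.degree w = 1 ∧ G.dist w u < G.dist w v).card

/-- The terminal Mostar index of a graph. -/
def terminalMostar {V : Type*} [Fintype V] (G : SimpleGraph V) : ℤ :=
  ∑ e ∈ G.edgeFinset,
    Sym2.lift ⟨fun u v => |(pendentCloserCount G u v : ℤ) - (pendentCloserCount G v u : ℤ)|,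
      fun _ _ => abs_sub_comm _ _⟩ e

/-- The irregularity of a graph. -/
def irreg {V : Type*} [Fintype V] (G : SimpleGraph V) : ℤ :=
  ∑ e ∈ G.edgeFinset,
    Sym2.lift ⟨fun u v => |(G.degree u : ℤ) - (G.degree v : ℤ)|,
      fun _ _ => abs_sub_comm _ _⟩ e

/-- The total Mostar index of a graph. -/
def totalMostar {V : Type*} [Fintype V] (G : SimpleGraph V) : ℤ :=
  ∑ e ∈ Finset.univ.sym2.filter (fun e => ¬ e.IsDiag),
    Sym2.lift ⟨fun u v => |(closerCount G u v : ℤ) - (closerCount G v u : ℤ)|,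
      fun _ _ => abs_sub_comm _ _⟩ e

/-- The sum peripherality of a vertex. -/
def sprVertex {V : Type*} [Fintype V] (G : SimpleGraph V) (v : V) : ℕ :=
  ∑ u ∈ Finset.univ.erase v, closerCount G u v

/-- The sum peripherality of a graph. -/
def spr {V : Type*} [Fintype V] (G : SimpleGraph V) : ℕ :=
  ∑ v, sprVertex G v

/-- The peripherality of a vertex. -/
def periVertex {V : Type*} [Fintype V] (G : SimpleGraph V) (v : V) : ℕ :=
  (Finset.univ.filter fun u => u ≠ v ∧ closerCount G v u < closerCount G u v).card

/-- The peripherality of a graph. -/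
def peri {V : Type*} [Fintype V] (G : SimpleGraph V) : ℕ :=
  ∑ v, periVertex G v

/-- The edge peripherality of the edge `{u, v}`. -/
def edgePeri {V : Type*} [Fintype V] (G : SimpleGraph V) (u v : V) : ℕ :=
  (Finset.univ.filter fun x => x ≠ u ∧ x ≠ v ∧
    closerCount G u x < closerCount G x u ∧ closerCount G v x < closerCount G x v).card

/-- The edge degree of the edge `{u, v}`. -/
def edgeDeg {V : Type*} [Fintype V] (G : SimpleGraph V) (u v : V) : ℕ :=
  (Finset.univ.filter fun x => x ≠ u ∧ x ≠ v ∧ (G.Adj x u ∨ G.Adj x v)).card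

/-- The eccentricity of a vertex. -/
def ecc {V : Type*} [Fintype V] (G : SimpleGraph V) (w : V) : ℕ :=
  Finset.univ.sup fun v => G.dist w v

/-- The spider graph with `k` legs whose lengths are given by `L`: the center is `none`,
and `some ⟨i, j⟩` is the `j`-th vertex (counted from the center) on leg `i`. -/
def spider (k : ℕ) (L : Fin k → ℕ) : SimpleGraph (Option ((i : Fin k) × Fin (L i))) :=
  SimpleGraph.fromRel fun u v =>
    (∃ (i : Fin k) (j : Fin (L i)), u = none ∧ v = some ⟨i, j⟩ ∧ (j : ℕ) = 0) ∨
    (∃ (i : Fin k) (j j' : Fin (L i)), u = some ⟨i, j⟩ ∧ v = some ⟨i, j'⟩ ∧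
      (j' : ℕ) = (j : ℕ) + 1)

/-- The full `m`-ary tree of depth `d`: vertex `⟨i, j⟩` is the `j`-th vertex at depth `i`, and
its parent is vertex `⟨i - 1, j / m⟩`. -/
def fullAryTree (m d : ℕ) : SimpleGraph ((i : Fin (d + 1)) × Fin (m ^ (i : ℕ))) :=
  SimpleGraph.fromRel fun u v =>
    (u.1 : ℕ) + 1 = (v.1 : ℕ) ∧ (v.2 : ℕ) / m = (u.2 : ℕ)

/-!
Exchanging the order of summation, `spr G` counts the triples `(w, u, v)` with
`d(w, u) < d(w, v)`. For fixed `w`, the `n²` ordered pairs `(u, v)` split into those with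
`d(w, u) < d(w, v)`, their mirror images, and the `e_w` pairs at equal distance from `w`, so `w`
contributes `(n² - e_w) / 2`. The pair `(w, w)` is counted in `e_w`, and the distance levels
`1, …, D` partition the other `n - 1` vertices, so Cauchy–Schwarz over the levels gives
`e_w ≥ 1 + (n - 1)² / D`.
-/

section PairsOrderedByLevel

variable {α β : Type*}

theorem two_mul_card_filter_lt_add_card_filter_eq [LinearOrder β] (s : Finset α) (f : α → β) :
    2 * #{p ∈ s ×ˢ s | f p.1 < f p.2} + #{p ∈ s ×ˢ s | f p.1 = f p.2} = #s ^ 2 := by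
  have hswap : #{p ∈ s ×ˢ s | f p.2 < f p.1} = #{p ∈ s ×ˢ s | f p.1 < f p.2} :=
    card_equiv (Equiv.prodComm α α) fun p => by simp [and_comm]
  have htri : ∀ p ∈ s ×ˢ s, ((if f p.1 < f p.2 then 1 else 0)
      + (if f p.2 < f p.1 then 1 else 0) + if f p.1 = f p.2 then 1 else 0 : ℕ) = 1 := by
    intro p _
    rcases lt_trichotomy (f p.1) (f p.2) with h | h | h
    · simp [h, h.ne, h.not_gt]
    · simp [h]
    · simp [h, h.ne', h.not_gt]
  calc 2 * #{p ∈ s ×ˢ s | f p.1 < f p.2} + #{p ∈ s ×ˢ s | f p.1 = f p.2}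
      = ∑ p ∈ s ×ˢ s, 1 := by
        rw [← sum_congr rfl htri, sum_add_distrib, sum_add_distrib, ← card_filter,
          ← card_filter, ← card_filter, hswap, two_mul]
    _ = #s ^ 2 := by rw [sum_const, card_product, smul_eq_mul, mul_one, sq]

theorem card_filter_eq_eq_sum_sq [DecidableEq β] {s : Finset α} {t : Finset β} {f : α → β}
    (hf : ∀ x ∈ s, f x ∈ t) :
    #{p ∈ s ×ˢ s | f p.1 = f p.2} = ∑ i ∈ t, #{x ∈ s | f x = i} ^ 2 := by
  calc #{p ∈ s ×ˢ s | f p.1 = f p.2}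
      = ∑ x ∈ s, #{y ∈ s | f y = f x} := by
        rw [card_filter, sum_product]
        refine sum_congr rfl fun x _ => ?_
        rw [card_filter]
        simp only [eq_comm]
    _ = ∑ i ∈ t, ∑ x ∈ s with f x = i, #{y ∈ s | f y = f x} :=
        (sum_fiberwise_of_maps_to hf _).symm
    _ = ∑ i ∈ t, #{x ∈ s | f x = i} ^ 2 := by
        refine sum_congr rfl fun i _ => ?_
        rw [sum_congr rfl fun x hx => by rw [(mem_filter.1 hx).2], sum_const, smul_eq_mul, sq]

theorem sq_card_div_card_le_card_filter_eq [DecidableEq β] {K : Type*} [Field K] [LinearOrder K]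
    [IsStrictOrderedRing K] {s : Finset α} {t : Finset β} {f : α → β}
    (hf : ∀ x ∈ s, f x ∈ t) :
    (#s : K) ^ 2 / #t ≤ #{p ∈ s ×ˢ s | f p.1 = f p.2} := by
  have h := pow_sum_div_card_le_sum_pow (s := t) (f := fun i => (#{x ∈ s | f x = i} : K))
    (fun _ _ => Nat.cast_nonneg _) 1
  rw [card_filter_eq_eq_sum_sq hf, card_eq_sum_card_fiberwise hf]
  push_cast
  simpa using h

end PairsOrderedByLevel

section SumPeripherality

variable {V : Type*} [Fintype V] {G : SimpleGraph V}

theorem spr_eq_sum_card_dist_lt (G : SimpleGraph V) :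
    spr G = ∑ w, #{p : V × V | G.dist w p.1 < G.dist w p.2} := by
  have hdiag : ∀ v, ∑ u ∈ univ.erase v, closerCount G u v = ∑ u, closerCount G u v :=
    fun v => sum_erase _ (by simp [closerCount])
  simp_rw [spr, sprVertex, hdiag, closerCount, card_filter, ← univ_product_univ, sum_product]
  exact (sum_congr rfl fun _ _ => sum_comm).trans
    (sum_comm.trans (sum_congr rfl fun _ _ => sum_comm))

theorem one_add_sq_div_le_card_dist_eq (hG : G.Connected) {D : ℕ}
    (hdiam : ∀ u v, G.dist u v ≤ D) (w : V) :
    1 + ((Fintype.card V : ℚ) - 1) ^ 2 / D ≤ #{p : V × V | G.dist w p.1 = G.dist w p.2} := by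
  set S := univ.erase w
  have hlevel : ∀ u ∈ S, G.dist w u ∈ Icc 1 D := fun u hu =>
    mem_Icc.2 ⟨hG.pos_dist_of_ne (ne_of_mem_erase hu).symm, hdiam w u⟩
  have hsub : insert (w, w) {p ∈ S ×ˢ S | G.dist w p.1 = G.dist w p.2}
      ⊆ ({p : V × V | G.dist w p.1 = G.dist w p.2} : Finset (V × V)) := by
    intro p
    simp only [mem_insert, mem_filter, mem_univ, true_and]
    rintro (rfl | ⟨-, h⟩) <;> simp_all
  have hnot : (w, w) ∉ {p ∈ S ×ˢ S | G.dist w p.1 = G.dist w p.2} := by simp [S]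
  have hS : (#S : ℚ) = Fintype.card V - 1 := by
    have := hG.nonempty
    rw [card_erase_of_mem (mem_univ w), card_univ, Nat.cast_pred Fintype.card_pos]
  calc (1 : ℚ) + ((Fintype.card V : ℚ) - 1) ^ 2 / D
      = 1 + (#S : ℚ) ^ 2 / #(Icc 1 D) := by rw [hS, Nat.card_Icc, Nat.add_sub_cancel]
    _ ≤ 1 + (#{p ∈ S ×ˢ S | G.dist w p.1 = G.dist w p.2} : ℚ) := by
        gcongr
        exact sq_card_div_card_le_card_filter_eq hlevel
    _ = (#(insert (w, w) {p ∈ S ×ˢ S | G.dist w p.1 = G.dist w p.2}) : ℚ) := by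
        rw [card_insert_of_notMem hnot]
        push_cast
        ring
    _ ≤ (#{p : V × V | G.dist w p.1 = G.dist w p.2} : ℚ) := by exact_mod_cast card_le_card hsub

theorem two_mul_card_dist_lt_le (hG : G.Connected) {D : ℕ} (hdiam : ∀ u v, G.dist u v ≤ D)
    (w : V) :
    2 * (#{p : V × V | G.dist w p.1 < G.dist w p.2} : ℚ)
      ≤ (Fintype.card V : ℚ) ^ 2 - 1 - ((Fintype.card V : ℚ) - 1) ^ 2 / D := by
  have hsplit : 2 * #{p : V × V | G.dist w p.1 < G.dist w p.2}
      + #{p : V × V | G.dist w p.1 = G.dist w p.2} = Fintype.card V ^ 2 := by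
    have h := two_mul_card_filter_lt_add_card_filter_eq univ (G.dist w)
    rw [univ_product_univ, card_univ] at h
    convert h using 5
  have hsplitℚ : 2 * (#{p : V × V | G.dist w p.1 < G.dist w p.2} : ℚ)
      + #{p : V × V | G.dist w p.1 = G.dist w p.2} = (Fintype.card V : ℚ) ^ 2 := by
    exact_mod_cast hsplit
  linarith [one_add_sq_div_le_card_dist_eq hG hdiam w]

end SumPeripherality

theorem spr_le_of_diam_general {V : Type*} [Fintype V] (G : SimpleGraph V) (hG : G.Connected)
    (n : ℕ) (hn : Fintype.card V = n) (D : ℕ)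
    (hdiam : ∀ u v : V, G.dist u v ≤ D) :
    (spr G : ℚ) ≤ (n : ℚ) ^ 2 * ((n : ℚ) - 1) / 2 - (n : ℚ) * ((n : ℚ) - 1) ^ 2 / (2 * D)
      + (n : ℚ) * ((n : ℚ) - 1) / 2 := by
  have hsum := sum_le_sum fun w (_ : w ∈ univ) => two_mul_card_dist_lt_le hG hdiam w
  rw [← mul_sum, sum_const, card_univ, nsmul_eq_mul, hn] at hsum
  have hspr : (spr G : ℚ) = ∑ w, (#{p : V × V | G.dist w p.1 < G.dist w p.2} : ℚ) := by
    exact_mod_cast spr_eq_sum_card_dist_lt G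
  calc (spr G : ℚ) ≤ n * ((n : ℚ) ^ 2 - 1 - ((n : ℚ) - 1) ^ 2 / D) / 2 := by linarith
    _ = _ := by ring

theorem spr_le_of_diam {V : Type*} [Fintype V] (G : SimpleGraph V) (hG : G.Connected)
    (n : ℕ) (hn : Fintype.card V = n) (D : ℕ) (hD : 1 ≤ D)
    (hdiam : ∀ u v : V, G.dist u v ≤ D) :
    (spr G : ℚ) ≤ (n : ℚ) ^ 2 * ((n : ℚ) - 1) / 2 - (n : ℚ) * ((n : ℚ) - 1) ^ 2 / (2 * D)
      + (n : ℚ) * ((n : ℚ) - 1) / 2 :=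
  spr_le_of_diam_general G hG n hn D hdiam
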